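/- arXiv:2602.12653 — 4 statements merged into one kernel-verified Lean document; each statement's English description precedes it below -/
import Mathlib

section
/- In the single-sample model, E[tr(S_n²)/p] = tr(Σ²)/p + (p/n)·(tr(Σ)/p)² + (1/n)·{tr(Σ²)/p + ((ν₄−3)/p)·tr(𝒟(Σ)²)}. -/
open Matrix MeasureTheory ProbabilityTheory Filter Finset

namespace PaperDefs

/-- Sample covariance matrix `S = n⁻¹ ∑ x_k x_kᵀ` from data `x 0, …, x (nn-1)`. -/
noncomputable def sampleCov (p nn : ℕ) (x : ℕ → Fin p → ℝ) : Matrix (Fin p) (Fin p) ℝ :=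
  (nn : ℝ)⁻¹ • ∑ k ∈ Finset.range nn, Matrix.vecMulVec (x k) (x k)

/-- The estimator `η̂₄` built from the data. -/
noncomputable def etaHat (p nn : ℕ) (x : ℕ → Fin p → ℝ) : ℝ :=
  (((nn - 4).factorial : ℝ) / (4 * p * (nn.factorial : ℝ))) *
    ∑ j1 ∈ Finset.range nn, ∑ j2 ∈ Finset.range nn, ∑ j3 ∈ Finset.range nn,
      ∑ j4 ∈ Finset.range nn,
        if j1 ≠ j2 ∧ j1 ≠ j3 ∧ j1 ≠ j4 ∧ j2 ≠ j3 ∧ j2 ≠ j4 ∧ j3 ≠ j4 then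
          (dotProduct (x j1 - x j2) (x j1 - x j2)
            - dotProduct (x j3 - x j4) (x j3 - x j4)) ^ 2
        else 0

/-- Diagonal entry `Ĝ_{ii}` of the sample Gram matrix. -/
noncomputable def gHatDiag (p nn : ℕ) (x : ℕ → Fin p → ℝ) : ℝ :=
  ((sampleCov p nn x * sampleCov p nn x).trace / p
      - ((p : ℝ) / nn) * ((sampleCov p nn x).trace / p) ^ 2
      - (((p : ℝ) / nn) / p - ((p : ℝ) / nn) ^ 2 / (p : ℝ) ^ 2) * etaHat p nn x) /
    ((1 - 2 * ((p : ℝ) / nn) / p) * (1 - ((p : ℝ) / nn) / p))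

/-- The sample Gram matrix `Ĝ` built from data `x i k : Fin p → ℝ`, sample sizes `nn i`. -/
noncomputable def gHat (p : ℕ) (nn : ℕ → ℕ) (x : ℕ → ℕ → Fin p → ℝ) (i j : ℕ) : ℝ :=
  if i = j then gHatDiag p (nn i) (x i)
  else (sampleCov p (nn i) (x i) * sampleCov p (nn j) (x j)).trace / p

/-- Determinant of the principal submatrix of `G` on the index set `s`. -/
noncomputable def subdet (G : ℕ → ℕ → ℝ) (s : Finset ℕ) : ℝ :=
  Matrix.det (Matrix.of fun i j : s => G i.1 j.1)

/-- `M^{(k)}`: average of the `k×k` principal minors of `G` over `k`-subsets of `{0,…,q-1}`. -/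
noncomputable def Mavg (G : ℕ → ℕ → ℝ) (q k : ℕ) : ℝ :=
  ((q.choose k : ℝ))⁻¹ * ∑ s ∈ (Finset.range q).powersetCard k, subdet G s

/-- Population Gram matrix entries `G_{ij} = tr(Σ_i Σ_j)/p`. -/
noncomputable def gramG (p : ℕ) (Sig : ℕ → Matrix (Fin p) (Fin p) ℝ) (i j : ℕ) : ℝ :=
  (Sig i * Sig j).trace / p

/-- `𝒟(A)`: the diagonal matrix with the same diagonal as `A`. -/
noncomputable def dgn {m : Type*} [DecidableEq m] (A : Matrix m m ℝ) : Matrix m m ℝ :=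
  Matrix.diagonal fun i => A i i

/-- `μ(A₁, A₂ | Λ)` (with a given square root `ΛHalf` of `Λ`). -/
noncomputable def muBil (p : ℕ) (ν₄ : ℝ) (Lam LamHalf A1 A2 : Matrix (Fin p) (Fin p) ℝ) : ℝ :=
  (2 / p) * (Lam * A1 * Lam * A2).trace
    + ((ν₄ - 3) / p) * (dgn (LamHalf * A1 * LamHalf) * dgn (LamHalf * A2 * LamHalf)).trace

/-- The (random) sample Gram matrix built from noise `z` and square roots `Sighalf`. -/
noncomputable def gHatRV (p : ℕ) (nn : ℕ → ℕ) {Ω : Type*}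
    (Sighalf : ℕ → Matrix (Fin p) (Fin p) ℝ)
    (z : ℕ → ℕ → Fin p → Ω → ℝ) (ω : Ω) : ℕ → ℕ → ℝ :=
  gHat p nn fun i k => (Sighalf i).mulVec fun j => z i k j ω

/-- The (random) statistic `M̂^{(k)}`. -/
noncomputable def mHatRV (p q : ℕ) (nn : ℕ → ℕ) {Ω : Type*}
    (Sighalf : ℕ → Matrix (Fin p) (Fin p) ℝ)
    (z : ℕ → ℕ → Fin p → Ω → ℝ) (k : ℕ) (ω : Ω) : ℝ :=
  Mavg (gHatRV p nn Sighalf z ω) q k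

/-- `β_p = q⁻¹ ∑ᵢ c_{i,p}² G_{ii}²`. -/
noncomputable def betaP (p q : ℕ) (nn : ℕ → ℕ) (Sig : ℕ → Matrix (Fin p) (Fin p) ℝ) : ℝ :=
  (q : ℝ)⁻¹ * ∑ i ∈ Finset.range q, ((p : ℝ) / nn i) ^ 2 * (gramG p Sig i i) ^ 2

/-- `β̂_p = q⁻¹ ∑ᵢ c_{i,p}² Ĝ_{ii}²`. -/
noncomputable def betaHatRV (p q : ℕ) (nn : ℕ → ℕ) {Ω : Type*}
    (Sighalf : ℕ → Matrix (Fin p) (Fin p) ℝ)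
    (z : ℕ → ℕ → Fin p → Ω → ℝ) (ω : Ω) : ℝ :=
  (q : ℝ)⁻¹ * ∑ i ∈ Finset.range q, ((p : ℝ) / nn i) ^ 2 * (gHatRV p nn Sighalf z ω i i) ^ 2

/-- The "matrix determinant": Laplace expansion along the first row `(top, Σ_{j₁}, …, Σ_{j_d})`,
the other rows being `(⟨Σ_{j_r}, top⟩, ⟨Σ_{j_r}, Σ_{j₁}⟩, …, ⟨Σ_{j_r}, Σ_{j_d}⟩)`, where
`J = {j₁ < ⋯ < j_d}` and `⟨A, B⟩ = tr(AB)/p`. -/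
noncomputable def detRow (p d : ℕ) (Sig : ℕ → Matrix (Fin p) (Fin p) ℝ)
    (top : Matrix (Fin p) (Fin p) ℝ) (J : Finset ℕ) : Matrix (Fin p) (Fin p) ℝ :=
  if h : J.card = d then
    let j := J.orderEmbOfFin h
    let B : Fin (d + 1) → Matrix (Fin p) (Fin p) ℝ := Fin.cons top fun l => Sig (j l)
    ∑ k : Fin (d + 1),
      ((-1 : ℝ) ^ (k : ℕ) *
        Matrix.det (Matrix.of fun r t : Fin d => (Sig (j r) * B (k.succAbove t)).trace / p)) • B k
  else 0

/-- The part `∑_{k=1}^{d} (-1)^{k+1} C_k(Σ;J) • Σ_{i_k}` of the Laplace expansion. -/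
noncomputable def detRow0 (p d : ℕ) (Sig : ℕ → Matrix (Fin p) (Fin p) ℝ)
    (top : Matrix (Fin p) (Fin p) ℝ) (J : Finset ℕ) : Matrix (Fin p) (Fin p) ℝ :=
  if h : J.card = d then
    let j := J.orderEmbOfFin h
    let B : Fin (d + 1) → Matrix (Fin p) (Fin p) ℝ := Fin.cons top fun l => Sig (j l)
    ∑ k : Fin d,
      ((-1 : ℝ) ^ (((k : ℕ) + 1) + 1) *
        Matrix.det (Matrix.of fun r t : Fin d =>
          (Sig (j r) * B ((k.succ : Fin (d + 1)).succAbove t)).trace / p)) • Sig (j k)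
  else 0

/-- Determinant of the `(d+1)×(d+1)` Gram matrix of `(top, Σ_{i₁}, …, Σ_{i_d})`. -/
noncomputable def gramDetExt (p d : ℕ) (Sig : ℕ → Matrix (Fin p) (Fin p) ℝ)
    (top : Matrix (Fin p) (Fin p) ℝ) (J : Finset ℕ) : ℝ :=
  if h : J.card = d then
    let j := J.orderEmbOfFin h
    let B : Fin (d + 1) → Matrix (Fin p) (Fin p) ℝ := Fin.cons top fun l => Sig (j l)
    Matrix.det (Matrix.of fun r s : Fin (d + 1) => (B r * B s).trace / p)
  else 0

/-- The matrix `R_i` from Theorem 2.1. -/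
noncomputable def rMat (p q d : ℕ) (Sig : ℕ → Matrix (Fin p) (Fin p) ℝ) (i : ℕ) :
    Matrix (Fin p) (Fin p) ℝ :=
  (((q - 1).choose d : ℝ))⁻¹ •
    ∑ J ∈ ((Finset.range q).erase i).powersetCard d, detRow p d Sig (Sig i) J

/-- `r_p^{(d₀)}` from Theorem 2.1. -/
noncomputable def rP (p q d : ℕ) (nn : ℕ → ℕ) (ν₄ : ℝ)
    (Sig Sighalf : ℕ → Matrix (Fin p) (Fin p) ℝ) : ℝ :=
  (q : ℝ)⁻¹ * ∑ i ∈ Finset.range q,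
    ((p : ℝ) / nn i) *
      ((2 / p) * ((Sighalf i * rMat p q d Sig i * Sighalf i)
            * (Sighalf i * rMat p q d Sig i * Sighalf i)).trace
        + ((ν₄ - 3) / p) * (dgn (Sighalf i * rMat p q d Sig i * Sighalf i)
            * dgn (Sighalf i * rMat p q d Sig i * Sighalf i)).trace)

end PaperDefs

namespace PaperDefs

/-- The (random) sample covariance matrix of a single sample. -/
noncomputable def sampleCovRV (p nn : ℕ) {Ω : Type*} (Sighalf : Matrix (Fin p) (Fin p) ℝ)
    (z : ℕ → Fin p → Ω → ℝ) (ω : Ω) : Matrix (Fin p) (Fin p) ℝ :=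
  sampleCov p nn fun k => Sighalf.mulVec fun j => z k j ω

end PaperDefs

/-!
Writing `S_n = n⁻¹ ∑ₖ xₖxₖᵀ` gives `tr(S_n²) = n⁻² ∑_{k,l} (xₖᵀxₗ)²` with `xₖᵀxₗ = zₖᵀΣzₗ`.
Everything then rests on the fourth-moment formula
`E[z_a z_b z_c z_d] = δ_ab δ_cd + δ_ac δ_bd + δ_ad δ_bc + (ν₄ - 3) δ_ab δ_ac δ_ad`
for independent standardized entries: a factor occurring exactly once is independent of the
product of the others and has mean zero. Summing it against `Σ ⊗ Σ` gives
`E[(zₖᵀΣzₗ)²] = tr(Σ²)` for `k ≠ l` and `tr(Σ)² + 2 tr(Σ²) + (ν₄ - 3) tr(𝒟(Σ)²)` for `k = l`.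
-/

instance ENNReal.holderTriple_four_four_two : ENNReal.HolderTriple 4 4 2 := ⟨by
  rw [← two_mul, show (4 : ENNReal) = 2 * 2 by norm_num, ENNReal.mul_inv (by simp) (by simp),
    ← mul_assoc, ENNReal.mul_inv_cancel (by simp) (by simp), one_mul]⟩

theorem MeasureTheory.memLp_four_of_integrable_pow_four {Ω : Type*} [MeasurableSpace Ω]
    {μ : Measure Ω} {f : Ω → ℝ} (hf : AEStronglyMeasurable f μ)
    (h : Integrable (fun ω => f ω ^ 4) μ) :
    MemLp f 4 μ := by
  refine (integrable_norm_rpow_iff hf (by norm_num) (by norm_num)).1 ?_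
  simp only [Real.norm_eq_abs, ENNReal.toReal_ofNat, Real.rpow_ofNat,
    (by decide : Even 4).pow_abs]
  exact h

theorem Matrix.sq_dotProduct_mulVec {α R : Type*} [Fintype α] [CommSemiring R]
    (x y : α → R) (A : Matrix α α R) :
    (x ⬝ᵥ A *ᵥ y) ^ 2 = ∑ a, ∑ b, ∑ c, ∑ d, A a b * A c d * (x a * y b * (x c * y d)) := by
  have hxy : x ⬝ᵥ A *ᵥ y = ∑ a, ∑ b, A a b * (x a * y b) := by
    simp only [dotProduct, mulVec, Finset.mul_sum]
    exact Finset.sum_congr rfl fun a _ => Finset.sum_congr rfl fun b _ => by ring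
  rw [hxy, sq, Finset.sum_mul_sum]
  refine Finset.sum_congr rfl fun a _ => ?_
  simp only [Finset.sum_mul_sum]
  rw [Finset.sum_comm]
  refine Finset.sum_congr rfl fun b _ => Finset.sum_congr rfl fun c _ =>
    Finset.sum_congr rfl fun d _ => by ring

theorem Matrix.mulVec_dotProduct_mulVec {α β R : Type*} [Fintype α] [Fintype β] [CommSemiring R]
    (H : Matrix α β R) (u v : β → R) : (H *ᵥ u) ⬝ᵥ (H *ᵥ v) = u ⬝ᵥ (Hᵀ * H) *ᵥ v := by
  rw [dotProduct_mulVec, ← vecMul_transpose, vecMul_vecMul, dotProduct_mulVec]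

theorem PaperDefs.trace_sampleCov_mul_self (p n : ℕ) (x : ℕ → Fin p → ℝ) :
    (sampleCov p n x * sampleCov p n x).trace
      = ((n : ℝ)⁻¹) ^ 2 * ∑ k ∈ Finset.range n, ∑ l ∈ Finset.range n, (x k ⬝ᵥ x l) ^ 2 := by
  simp only [sampleCov, smul_mul_smul, Finset.sum_mul_sum, vecMulVec_mul_vecMulVec, trace_smul,
    trace_sum, trace_vecMulVec, dotProduct_smul, smul_eq_mul, sq]

structure IndepStandardized {Ω ι : Type*} [MeasurableSpace Ω] (m : ι → Ω → ℝ) (μ : Measure Ω)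
    (ν₄ : ℝ) : Prop where
  measurable : ∀ i, Measurable (m i)
  indep : iIndepFun m μ
  integral_eq_zero : ∀ i, ∫ ω, m i ω ∂μ = 0
  integral_sq : ∀ i, ∫ ω, m i ω ^ 2 ∂μ = 1
  integral_pow_four : ∀ i, ∫ ω, m i ω ^ 4 ∂μ = ν₄
  integrable_pow_four : ∀ i, Integrable (fun ω => m i ω ^ 4) μ

namespace IndepStandardized

section Family

variable {Ω ι : Type*} [MeasurableSpace Ω] {μ : Measure Ω} {m : ι → Ω → ℝ} {ν₄ : ℝ}

theorem integrable_mul_four (h : IndepStandardized m μ ν₄) (i j k l : ι) :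
    Integrable (fun ω => m i ω * m j ω * (m k ω * m l ω)) μ :=
  have hm (i : ι) : MemLp (m i) 4 μ :=
    memLp_four_of_integrable_pow_four (h.measurable i).aestronglyMeasurable
      (h.integrable_pow_four i)
  have hm2 (i j : ι) : MemLp (fun ω => m i ω * m j ω) 2 μ := (hm j).mul' (hm i)
  (hm2 i j).integrable_mul (hm2 k l)

theorem integral_mul_eq_zero_of_ne (h : IndepStandardized m μ ν₄) {i j k l : ι}
    (hj : i ≠ j) (hk : i ≠ k) (hl : i ≠ l) :
    ∫ ω, m i ω * (m j ω * m k ω * m l ω) ∂μ = 0 := by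
  classical
  have hind : IndepFun (m i) (fun ω => m j ω * m k ω * m l ω) μ :=
    (h.indep.indepFun_finset {i} {j, k, l} (by simp [hj, hk, hl]) h.measurable).comp
      (φ := fun x : ({i} : Finset ι) → ℝ => x ⟨i, by simp⟩)
      (ψ := fun x : ({j, k, l} : Finset ι) → ℝ =>
        x ⟨j, by simp⟩ * x ⟨k, by simp⟩ * x ⟨l, by simp⟩)
      (measurable_pi_apply _) (by fun_prop)
  rw [hind.integral_fun_mul_eq_mul_integral (h.measurable i).aestronglyMeasurable
    (((h.measurable j).mul (h.measurable k)).mul (h.measurable l)).aestronglyMeasurable,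
    h.integral_eq_zero, zero_mul]

theorem integral_mul_self (h : IndepStandardized m μ ν₄) (i : ι) :
    ∫ ω, m i ω * m i ω ∂μ = 1 := by
  simpa only [sq] using h.integral_sq i

theorem integral_mul_self_mul [DecidableEq ι] (h : IndepStandardized m μ ν₄) (i k l : ι) :
    ∫ ω, m i ω * m i ω * (m k ω * m l ω) ∂μ
      = (if k = l then 1 else 0)
        + (ν₄ - 1) * ((if i = k then 1 else 0) * (if i = l then 1 else 0)) := by
  by_cases hkl : k = l
  · subst hkl
    by_cases hik : i = k
    · subst hik
      calc _ = ∫ ω, m i ω ^ 4 ∂μ := by congr 1; ext ω; ring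
        _ = _ := by simp [h.integral_pow_four]
    · have hind := h.indep.indepFun_mul_mul h.measurable i i k k hik hik hik hik
      calc _ = (∫ ω, m i ω * m i ω ∂μ) * ∫ ω, m k ω * m k ω ∂μ :=
            hind.integral_fun_mul_eq_mul_integral
              ((h.measurable i).mul (h.measurable i)).aestronglyMeasurable
              ((h.measurable k).mul (h.measurable k)).aestronglyMeasurable
        _ = _ := by simp [h.integral_mul_self, hik]
  · by_cases hik : i = k
    · subst hik
      have hli : l ≠ i := Ne.symm hkl
      calc _ = ∫ ω, m l ω * (m i ω * m i ω * m i ω) ∂μ := by congr 1; ext ω; ring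
        _ = 0 := h.integral_mul_eq_zero_of_ne hli hli hli
        _ = _ := by simp [hkl]
    · calc _ = ∫ ω, m k ω * (m i ω * m i ω * m l ω) ∂μ := by congr 1; ext ω; ring
        _ = 0 := h.integral_mul_eq_zero_of_ne (Ne.symm hik) (Ne.symm hik) hkl
        _ = _ := by simp [hkl, hik]

theorem integral_mul_four [DecidableEq ι] (h : IndepStandardized m μ ν₄) (i j k l : ι) :
    ∫ ω, m i ω * m j ω * (m k ω * m l ω) ∂μ =
      (if i = j then 1 else 0) * (if k = l then 1 else 0)
      + (if i = k then 1 else 0) * (if j = l then 1 else 0)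
      + (if i = l then 1 else 0) * (if j = k then 1 else 0)
      + (ν₄ - 3) *
          ((if i = j then 1 else 0) * (if i = k then 1 else 0) * (if i = l then 1 else 0)) := by
  by_cases hij : i = j
  · subst hij
    rw [h.integral_mul_self_mul]
    split_ifs <;> simp_all
    ring
  by_cases hik : i = k
  · subst hik
    calc _ = ∫ ω, m i ω * m i ω * (m j ω * m l ω) ∂μ := by congr 1; ext ω; ring
      _ = _ := h.integral_mul_self_mul i j l
      _ = _ := by split_ifs <;> simp_all
  by_cases hil : i = l
  · subst hil
    calc _ = ∫ ω, m i ω * m i ω * (m j ω * m k ω) ∂μ := by congr 1; ext ω; ring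
      _ = _ := h.integral_mul_self_mul i j k
      _ = _ := by split_ifs <;> simp_all
  calc _ = ∫ ω, m i ω * (m j ω * m k ω * m l ω) ∂μ := by congr 1; ext ω; ring
    _ = 0 := h.integral_mul_eq_zero_of_ne hij hik hil
    _ = _ := by simp [hij, hik, hil]

end Family

section Rows

variable {Ω κ α : Type*} [MeasurableSpace Ω] {μ : Measure Ω} [Fintype α] {m : κ × α → Ω → ℝ}
  {ν₄ : ℝ}

theorem integrable_sq_dotProduct_mulVec (h : IndepStandardized m μ ν₄) (A : Matrix α α ℝ)
    (k l : κ) :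
    Integrable (fun ω => ((fun a => m (k, a) ω) ⬝ᵥ A *ᵥ fun b => m (l, b) ω) ^ 2) μ := by
  simp only [sq_dotProduct_mulVec]
  exact integrable_finsetSum _ fun a _ => integrable_finsetSum _ fun b _ =>
    integrable_finsetSum _ fun c _ => integrable_finsetSum _ fun d _ =>
      (h.integrable_mul_four _ _ _ _).const_mul _

theorem integral_sq_dotProduct_mulVec (h : IndepStandardized m μ ν₄) (A : Matrix α α ℝ)
    (k l : κ) :
    ∫ ω, ((fun a => m (k, a) ω) ⬝ᵥ A *ᵥ fun b => m (l, b) ω) ^ 2 ∂μ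
      = ∑ a, ∑ b, ∑ c, ∑ d, A a b * A c d *
          ∫ ω, m (k, a) ω * m (l, b) ω * (m (k, c) ω * m (l, d) ω) ∂μ := by
  have hI (a b c d : α) := (h.integrable_mul_four (k, a) (l, b) (k, c) (l, d)).const_mul
    (A a b * A c d)
  simp only [sq_dotProduct_mulVec]
  rw [integral_finsetSum _ fun a _ => integrable_finsetSum _ fun b _ =>
    integrable_finsetSum _ fun c _ => integrable_finsetSum _ fun d _ => hI a b c d]
  refine Finset.sum_congr rfl fun a _ => ?_
  rw [integral_finsetSum _ fun b _ => integrable_finsetSum _ fun c _ =>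
    integrable_finsetSum _ fun d _ => hI a b c d]
  refine Finset.sum_congr rfl fun b _ => ?_
  rw [integral_finsetSum _ fun c _ => integrable_finsetSum _ fun d _ => hI a b c d]
  refine Finset.sum_congr rfl fun c _ => ?_
  rw [integral_finsetSum _ fun d _ => hI a b c d]
  exact Finset.sum_congr rfl fun d _ => integral_const_mul _ _

theorem integral_sq_dotProduct_mulVec_of_ne [DecidableEq κ] [DecidableEq α]
    (h : IndepStandardized m μ ν₄) (A : Matrix α α ℝ) {k l : κ} (hkl : k ≠ l) :
    ∫ ω, ((fun a => m (k, a) ω) ⬝ᵥ A *ᵥ fun b => m (l, b) ω) ^ 2 ∂μ = (A * Aᵀ).trace := by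
  rw [h.integral_sq_dotProduct_mulVec]
  simp [h.integral_mul_four, hkl, trace, mul_apply]

theorem integral_sq_dotProduct_mulVec_self [DecidableEq κ] [DecidableEq α]
    (h : IndepStandardized m μ ν₄) (A : Matrix α α ℝ) (k : κ) :
    ∫ ω, ((fun a => m (k, a) ω) ⬝ᵥ A *ᵥ fun b => m (k, b) ω) ^ 2 ∂μ
      = A.trace ^ 2 + (A * Aᵀ).trace + (A * A).trace
        + (ν₄ - 3) * (PaperDefs.dgn A * PaperDefs.dgn A).trace := by
  rw [h.integral_sq_dotProduct_mulVec]
  simp only [h.integral_mul_four, Prod.mk.injEq, true_and, mul_ite, mul_one, mul_zero, mul_add,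
    sum_add_distrib, sum_ite_eq, mem_univ, ↓reduceIte, sum_ite_irrel, sum_const_zero, trace,
    diag_apply, sq, sum_mul_sum, mul_apply, transpose_apply, PaperDefs.dgn, diagonal_mul_diagonal,
    diagonal_apply_eq, add_right_inj]
  rw [Finset.mul_sum]
  exact Finset.sum_congr rfl fun a _ => mul_comm _ _

end Rows

end IndepStandardized

theorem statement1_general
    (p n : ℕ) (hn : 0 < n)
    {Ω : Type} [MeasurableSpace Ω] (μ : MeasureTheory.Measure Ω)
    (ν₄ : ℝ)
    (z : ℕ → Fin p → Ω → ℝ)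
    (hmeas : ∀ k (j : Fin p), k < n → Measurable (z k j))
    (hindep : iIndepFun
      (fun kj : {k : ℕ // k < n} × Fin p => z kj.1.1 kj.2) μ)
    (hmean : ∀ k (j : Fin p), k < n → ∫ ω, z k j ω ∂μ = 0)
    (hvar : ∀ k (j : Fin p), k < n → ∫ ω, (z k j ω) ^ 2 ∂μ = 1)
    (hm4 : ∀ k (j : Fin p), k < n → ∫ ω, (z k j ω) ^ 4 ∂μ = ν₄)
    (hint4 : ∀ k (j : Fin p), k < n → Integrable (fun ω => (z k j ω) ^ 4) μ)
    (Sig Sighalf : Matrix (Fin p) (Fin p) ℝ)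
    (hSighalf : Sighalf.PosSemidef)
    (hsqrt : Sighalf * Sighalf = Sig) :
    ∫ ω, ((PaperDefs.sampleCovRV p n Sighalf z ω)
          * (PaperDefs.sampleCovRV p n Sighalf z ω)).trace / p ∂μ
      = (Sig * Sig).trace / p + ((p : ℝ) / n) * (Sig.trace / p) ^ 2
        + (1 / (n : ℝ)) * ((Sig * Sig).trace / p
            + ((ν₄ - 3) / p) * (PaperDefs.dgn Sig * PaperDefs.dgn Sig).trace) := by
  have hZ : IndepStandardized (fun kj : {k : ℕ // k < n} × Fin p => z kj.1.1 kj.2) μ ν₄ :=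
    ⟨fun kj => hmeas _ _ kj.1.2, hindep, fun kj => hmean _ _ kj.1.2, fun kj => hvar _ _ kj.1.2,
      fun kj => hm4 _ _ kj.1.2, fun kj => hint4 _ _ kj.1.2⟩
  have hHt : Sighalfᵀ = Sighalf := hSighalf.isHermitian
  have hSt : Sigᵀ = Sig := by rw [← hsqrt, transpose_mul, hHt]
  have hGram (ω : Ω) (k l : ℕ) : (Sighalf *ᵥ fun j => z k j ω) ⬝ᵥ (Sighalf *ᵥ fun j => z l j ω)
      = (fun j => z k j ω) ⬝ᵥ Sig *ᵥ fun j => z l j ω := by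
    rw [mulVec_dotProduct_mulVec, hHt, hsqrt]
  have hint : ∀ k ∈ range n, ∀ l ∈ range n,
      Integrable (fun ω => ((fun j => z k j ω) ⬝ᵥ Sig *ᵥ fun j => z l j ω) ^ 2) μ :=
    fun k hk l hl =>
      hZ.integrable_sq_dotProduct_mulVec Sig ⟨k, mem_range.1 hk⟩ ⟨l, mem_range.1 hl⟩
  have hmoment : ∀ k ∈ range n, ∀ l ∈ range n,
      ∫ ω, ((fun j => z k j ω) ⬝ᵥ Sig *ᵥ fun j => z l j ω) ^ 2 ∂μ
        = (Sig * Sig).trace + if k = l then Sig.trace ^ 2 + (Sig * Sig).trace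
            + (ν₄ - 3) * (PaperDefs.dgn Sig * PaperDefs.dgn Sig).trace else 0 := by
    intro k hk l hl
    by_cases hkl : k = l
    · subst hkl
      rw [hZ.integral_sq_dotProduct_mulVec_self Sig ⟨k, mem_range.1 hk⟩, hSt, if_pos rfl]
      ring
    · rw [hZ.integral_sq_dotProduct_mulVec_of_ne Sig (k := ⟨k, mem_range.1 hk⟩)
        (l := ⟨l, mem_range.1 hl⟩) (by simpa using hkl), hSt, if_neg hkl, add_zero]
  simp only [PaperDefs.sampleCovRV, PaperDefs.trace_sampleCov_mul_self, hGram]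
  rw [integral_div, integral_const_mul,
    integral_finsetSum _ fun k hk => integrable_finsetSum _ (hint k hk),
    Finset.sum_congr rfl fun k hk => integral_finsetSum _ (hint k hk)]
  rw [Finset.sum_congr rfl fun k hk => Finset.sum_congr rfl (hmoment k hk)]
  simp only [Finset.sum_add_distrib, Finset.sum_const, Finset.card_range, nsmul_eq_mul,
    Finset.sum_ite_eq, Finset.sum_ite_mem, Finset.inter_self]
  field_simp
  ring

/-- In the single-sample model,
`E[tr(S_n²)/p] = tr(Σ²)/p + (p/n)(tr(Σ)/p)² + (1/n){tr(Σ²)/p + ((ν₄−3)/p) tr(𝒟(Σ)²)}`. -/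
theorem statement1
    (p n : ℕ) (hp : 0 < p) (hn : 0 < n)
    {Ω : Type} [MeasurableSpace Ω] (μ : MeasureTheory.Measure Ω) [IsProbabilityMeasure μ]
    (ν₄ : ℝ)
    (z : ℕ → Fin p → Ω → ℝ)
    (hmeas : ∀ k (j : Fin p), k < n → Measurable (z k j))
    (hindep : iIndepFun
      (fun kj : {k : ℕ // k < n} × Fin p => z kj.1.1 kj.2) μ)
    (hident : ∀ k k' (j j' : Fin p), k < n → k' < n →
      IdentDistrib (z k j) (z k' j') μ μ)
    (hmean : ∀ k (j : Fin p), k < n → ∫ ω, z k j ω ∂μ = 0)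
    (hvar : ∀ k (j : Fin p), k < n → ∫ ω, (z k j ω) ^ 2 ∂μ = 1)
    (hm4 : ∀ k (j : Fin p), k < n → ∫ ω, (z k j ω) ^ 4 ∂μ = ν₄)
    (hint4 : ∀ k (j : Fin p), k < n → Integrable (fun ω => (z k j ω) ^ 4) μ)
    (Sig Sighalf : Matrix (Fin p) (Fin p) ℝ)
    (hSig : Sig.PosSemidef) (hSighalf : Sighalf.PosSemidef)
    (hsqrt : Sighalf * Sighalf = Sig) :
    ∫ ω, ((PaperDefs.sampleCovRV p n Sighalf z ω)
          * (PaperDefs.sampleCovRV p n Sighalf z ω)).trace / p ∂μ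
      = (Sig * Sig).trace / p + ((p : ℝ) / n) * (Sig.trace / p) ^ 2
        + (1 / (n : ℝ)) * ((Sig * Sig).trace / p
            + ((ν₄ - 3) / p) * (PaperDefs.dgn Sig * PaperDefs.dgn Sig).trace) :=
  statement1_general p n hn μ ν₄ z hmeas hindep hmean hvar hm4 hint4 Sig Sighalf hSighalf hsqrt
end

section
/- In the single-sample model, for any p×p real symmetric matrices A₁ and A₂: E[(tr(S_n A₁)/p)·(tr(S_n A₂)/p)] = (tr(Σ A₁)/p)·(tr(Σ A₂)/p) + (1/(pn))·μ(A₁,A₂|Σ). -/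
open Matrix MeasureTheory ProbabilityTheory Filter Finset

/-!
With `x_k = Σ^{1/2} z_k`, the trace `n · tr(S_n A)` is the quadratic form `Zᵀ (I_n ⊗ B) Z` with
`B = Σ^{1/2} A Σ^{1/2}` in the vector `Z` of all `np` noise entries, which are i.i.d. and
standardized. For such a vector the fourth-moment formula
`E[ξᵢξⱼξₖξₗ] = δᵢⱼδₖₗ + δᵢₖδⱼₗ + δᵢₗδⱼₖ + (ν₄ - 3)δᵢⱼₖₗ` gives
`E[(ZᵀWZ)(ZᵀVZ)] = tr W tr V + tr(WVᵀ) + tr(WV) + (ν₄ - 3) tr(W ⊙ V)`. For `W = I_n ⊗ B₁` and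
`V = I_n ⊗ B₂` the Kronecker structure turns the first trace into `n² tr B₁ tr B₂` and the others
into `n` times the corresponding traces of `B₁, B₂`.
-/

open scoped Kronecker

/-- For `κ = 0` this is Isserlis' formula for standard Gaussians. -/
def fourthMomentTensor {ι : Type*} [DecidableEq ι] (κ : ℝ) (i j k l : ι) : ℝ :=
  (if i = j then 1 else 0) * (if k = l then 1 else 0)
    + (if i = k then 1 else 0) * (if j = l then 1 else 0)
    + (if i = l then 1 else 0) * (if j = k then 1 else 0)
    + κ * (if i = j ∧ i = k ∧ i = l then 1 else 0)

section FourthMoment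

variable {Ω ι : Type*} [MeasurableSpace Ω] {μ : Measure Ω} {f : ι → Ω → ℝ}

lemma abs_mul_mul_mul_le (a b c d : ℝ) :
    |a * b * c * d| ≤ (a ^ 4 + b ^ 4 + c ^ 4 + d ^ 4) / 4 := by
  rw [abs_le]
  constructor <;> nlinarith [sq_nonneg (a * b - c * d), sq_nonneg (a * b + c * d),
    sq_nonneg (a ^ 2 - b ^ 2), sq_nonneg (c ^ 2 - d ^ 2)]

lemma integrable_mul_mul_mul (hmeas : ∀ i, Measurable (f i))
    (hint4 : ∀ i, Integrable (fun ω => f i ω ^ 4) μ) (a b c d : ι) :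
    Integrable (fun ω => f a ω * f b ω * f c ω * f d ω) μ := by
  refine Integrable.mono' ((((hint4 a).add (hint4 b)).add (hint4 c)).add (hint4 d) |>.div_const 4)
    (by fun_prop) (ae_of_all _ fun ω => ?_)
  simpa using abs_mul_mul_mul_le (f a ω) (f b ω) (f c ω) (f d ω)

variable (hindep : iIndepFun f μ) (hmeas : ∀ i, Measurable (f i))
include hindep hmeas

lemma integral_mul_mul_mul_eq_zero_of_ne {a b c d : ι} (hmean : ∫ ω, f a ω ∂μ = 0)
    (hab : a ≠ b) (hac : a ≠ c) (had : a ≠ d) :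
    ∫ ω, f a ω * (f b ω * f c ω * f d ω) ∂μ = 0 := by
  classical
  have hdisj : Disjoint ({a} : Finset ι) {b, c, d} := by simp [hab, hac, had]
  have hind := (hindep.indepFun_finset _ _ hdisj hmeas).comp
    (measurable_pi_apply ⟨a, Finset.mem_singleton_self a⟩)
    (show Measurable fun x : ({b, c, d} : Finset ι) → ℝ =>
      x ⟨b, by simp⟩ * x ⟨c, by simp⟩ * x ⟨d, by simp⟩ by fun_prop)
  have hmul := hind.integral_mul_eq_mul_integral (hmeas a).aestronglyMeasurable (by fun_prop)
  simpa [hmean] using hmul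

lemma integral_sq_mul_sq {a b : ι} (hab : a ≠ b) :
    ∫ ω, f a ω ^ 2 * f b ω ^ 2 ∂μ = (∫ ω, f a ω ^ 2 ∂μ) * ∫ ω, f b ω ^ 2 ∂μ :=
  ((hindep.indepFun hab).comp (measurable_id.pow_const 2) (measurable_id.pow_const 2)
    |>.integral_mul_eq_mul_integral (by fun_prop) (by fun_prop))

variable {ν₄ : ℝ} (hmean : ∀ i, ∫ ω, f i ω ∂μ = 0) (hvar : ∀ i, ∫ ω, f i ω ^ 2 ∂μ = 1)
  (hm4 : ∀ i, ∫ ω, f i ω ^ 4 ∂μ = ν₄)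
include hmean hvar hm4

theorem integral_mul_mul_mul_eq_fourthMomentTensor [DecidableEq ι] (a b c d : ι) :
    ∫ ω, f a ω * f b ω * f c ω * f d ω ∂μ = fourthMomentTensor (ν₄ - 3) a b c d := by
  unfold fourthMomentTensor
  have single {i j k l : ι} (hij : i ≠ j) (hik : i ≠ k) (hil : i ≠ l) :=
    integral_mul_mul_mul_eq_zero_of_ne hindep hmeas (hmean i) hij hik hil
  have pair {i j : ι} (hij : i ≠ j) : ∫ ω, f i ω ^ 2 * f j ω ^ 2 ∂μ = 1 := by
    rw [integral_sq_mul_sq hindep hmeas hij, hvar, hvar, one_mul]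
  -- Either some index occurs exactly once, and the moment vanishes, or the indices pair up.
  rcases eq_or_ne a b with rfl | hab
  · rcases eq_or_ne c d with rfl | hcd
    · rcases eq_or_ne a c with rfl | hac
      · convert hm4 a using 3 with ω
        · ring
        · simp only [and_self, if_true]; ring
      · convert pair hac using 3 with ω
        · ring
        · simp [hac]
    · rcases eq_or_ne a c with rfl | hac
      · convert single hcd.symm hcd.symm hcd.symm using 3 with ω
        · ring
        · simp [hcd]
      · convert single hac.symm hac.symm hcd using 3 with ω
        · ring
        · simp [hcd, hac]
  · rcases eq_or_ne a c with rfl | hac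
    · rcases eq_or_ne b d with rfl | hbd
      · convert pair hab using 3 with ω
        · ring
        · simp [hab]
      · convert single hab.symm hab.symm hbd using 3 with ω
        · ring
        · simp [hab, hab.symm, hbd]
    · rcases eq_or_ne a d with rfl | had
      · rcases eq_or_ne b c with rfl | hbc
        · convert pair hab using 3 with ω
          · ring
          · simp [hab]
        · convert single hab.symm hbc hab.symm using 3 with ω
          · ring
          · simp [hab, hac, hbc]
      · convert single hab hac had using 3 with ω
        · ring
        · simp [hab, hac, had]

end FourthMoment

section QuadraticForm

variable {Ω ι : Type*} [MeasurableSpace Ω] {μ : Measure Ω} {f : ι → Ω → ℝ} [Fintype ι]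
  [DecidableEq ι]

lemma sum_mul_fourthMomentTensor (W V : Matrix ι ι ℝ) (c : ℝ) :
    ∑ i, ∑ j, ∑ k, ∑ l, W i j * V k l * fourthMomentTensor c i j k l
      = W.trace * V.trace + (W * Vᵀ).trace + (W * V).trace + c * (W ⊙ V).trace := by
  simp only [fourthMomentTensor, mul_ite, mul_one, mul_zero, ite_and, mul_add, sum_add_distrib,
    sum_ite_eq, mem_univ, ↓reduceIte, sum_ite_irrel, sum_const_zero, trace, diag_apply, mul_sum,
    sum_mul, Matrix.mul_apply, transpose_apply, hadamard_apply]
  rw [Finset.sum_comm]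
  simp only [mul_comm c]

theorem integral_dotProduct_mulVec_mul_dotProduct_mulVec (hindep : iIndepFun f μ)
    (hmeas : ∀ i, Measurable (f i)) (hint4 : ∀ i, Integrable (fun ω => f i ω ^ 4) μ) {ν₄ : ℝ}
    (hmean : ∀ i, ∫ ω, f i ω ∂μ = 0) (hvar : ∀ i, ∫ ω, f i ω ^ 2 ∂μ = 1)
    (hm4 : ∀ i, ∫ ω, f i ω ^ 4 ∂μ = ν₄) (W V : Matrix ι ι ℝ) :
    ∫ ω, ((fun i => f i ω) ⬝ᵥ (W *ᵥ fun i => f i ω))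
        * ((fun i => f i ω) ⬝ᵥ (V *ᵥ fun i => f i ω)) ∂μ
      = W.trace * V.trace + (W * Vᵀ).trace + (W * V).trace + (ν₄ - 3) * (W ⊙ V).trace := by
  have hexpand : ∀ ω, ((fun i => f i ω) ⬝ᵥ (W *ᵥ fun i => f i ω))
      * ((fun i => f i ω) ⬝ᵥ (V *ᵥ fun i => f i ω))
      = ∑ x : ι × ι × ι × ι, W x.1 x.2.1 * V x.2.2.1 x.2.2.2
          * (f x.1 ω * f x.2.1 ω * f x.2.2.1 ω * f x.2.2.2 ω) := by
    intro ω
    rw [mul_comm]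
    simp only [dotProduct, mulVec, Finset.sum_mul, Finset.mul_sum, Fintype.sum_prod_type]
    congr! 4
    ring
  have hint (x : ι × ι × ι × ι) : Integrable (fun ω => W x.1 x.2.1 * V x.2.2.1 x.2.2.2
      * (f x.1 ω * f x.2.1 ω * f x.2.2.1 ω * f x.2.2.2 ω)) μ :=
    (integrable_mul_mul_mul hmeas hint4 _ _ _ _).const_mul _
  simp only [hexpand]
  rw [integral_finsetSum _ fun x _ => hint x]
  simp only [integral_const_mul,
    integral_mul_mul_mul_eq_fourthMomentTensor hindep hmeas hmean hvar hm4, Fintype.sum_prod_type]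
  exact sum_mul_fourthMomentTensor W V (ν₄ - 3)

end QuadraticForm

section Kronecker

variable {K m R : Type*} [DecidableEq K] [CommSemiring R]

lemma transpose_one_kronecker (B : Matrix m m R) :
    (1 ⊗ₖ B : Matrix (K × m) (K × m) R)ᵀ = 1 ⊗ₖ Bᵀ := by
  rw [← kroneckerMap_transpose, transpose_one]

lemma one_kronecker_hadamard_one_kronecker (B C : Matrix m m R) :
    (1 ⊗ₖ B : Matrix (K × m) (K × m) R) ⊙ (1 ⊗ₖ C) = 1 ⊗ₖ (B ⊙ C) := by
  rw [kronecker_hadamard_kronecker, hadamard_one, diag_one]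
  rfl

variable [Fintype K] [Fintype m]

lemma one_kronecker_mul_one_kronecker (B C : Matrix m m R) :
    (1 ⊗ₖ B : Matrix (K × m) (K × m) R) * (1 ⊗ₖ C) = 1 ⊗ₖ (B * C) := by
  rw [← mul_kronecker_mul, one_mul]

lemma trace_one_kronecker (B : Matrix m m R) :
    (1 ⊗ₖ B : Matrix (K × m) (K × m) R).trace = Fintype.card K * B.trace := by
  rw [trace_kronecker, trace_one]

lemma dotProduct_one_kronecker_mulVec (B : Matrix m m R) (Z : K × m → R) :
    Z ⬝ᵥ ((1 ⊗ₖ B) *ᵥ Z) = ∑ k, (fun a => Z (k, a)) ⬝ᵥ (B *ᵥ fun a => Z (k, a)) := by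
  simp [dotProduct, mulVec, Fintype.sum_prod_type, one_apply, ite_mul, Finset.mul_sum]

end Kronecker

section DotProduct

variable {m R : Type*} [Fintype m] [CommSemiring R]

lemma trace_vecMulVec_self_mul (u : m → R) (A : Matrix m m R) :
    (vecMulVec u u * A).trace = u ⬝ᵥ (A *ᵥ u) := by
  rw [vecMulVec_mul, trace_vecMulVec, dotProduct_mulVec, dotProduct_comm]

lemma mulVec_dotProduct_mulVec_mulVec (H A : Matrix m m R) (v : m → R) :
    (H *ᵥ v) ⬝ᵥ (A *ᵥ (H *ᵥ v)) = v ⬝ᵥ ((Hᵀ * A * H) *ᵥ v) := by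
  rw [← mulVec_mulVec, ← mulVec_mulVec, dotProduct_mulVec v, vecMul_transpose]

lemma sum_range_dotProduct_mulVec (n : ℕ) (v : ℕ → m → R) (B : Matrix m m R) :
    ∑ k ∈ Finset.range n, v k ⬝ᵥ (B *ᵥ v k)
      = (fun kj : Fin n × m => v kj.1 kj.2)
          ⬝ᵥ ((1 ⊗ₖ B : Matrix (Fin n × m) (Fin n × m) R) *ᵥ fun kj => v kj.1 kj.2) := by
  rw [Finset.sum_range, dotProduct_one_kronecker_mulVec]

end DotProduct

lemma trace_sampleCov_mul (p n : ℕ) (x : ℕ → Fin p → ℝ) (A : Matrix (Fin p) (Fin p) ℝ) :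
    (PaperDefs.sampleCov p n x * A).trace
      = (n : ℝ)⁻¹ * ∑ k ∈ Finset.range n, x k ⬝ᵥ (A *ᵥ x k) := by
  simp [PaperDefs.sampleCov, Finset.sum_mul, trace_sum, trace_vecMulVec_self_mul]

lemma trace_sampleCovRV_mul (p n : ℕ) {Ω : Type*} (H : Matrix (Fin p) (Fin p) ℝ)
    (z : ℕ → Fin p → Ω → ℝ) (A : Matrix (Fin p) (Fin p) ℝ) (ω : Ω) :
    (PaperDefs.sampleCovRV p n H z ω * A).trace
      = (n : ℝ)⁻¹ * ((fun kj : Fin n × Fin p => z kj.1 kj.2 ω)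
          ⬝ᵥ ((1 ⊗ₖ (Hᵀ * A * H) : Matrix (Fin n × Fin p) (Fin n × Fin p) ℝ)
            *ᵥ fun kj => z kj.1 kj.2 ω)) := by
  simp only [PaperDefs.sampleCovRV, trace_sampleCov_mul, mulVec_dotProduct_mulVec_mulVec,
    sum_range_dotProduct_mulVec]

section TraceIdentities

variable {m R : Type*} [Fintype m] [CommSemiring R]

lemma trace_mul_mul_self (H A : Matrix m m R) : (H * A * H).trace = (H * H * A).trace := by
  rw [trace_mul_comm, ← mul_assoc]

lemma trace_mul_mul_self_mul_mul_mul_self (H A B : Matrix m m R) :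
    (H * A * H * (H * B * H)).trace = (H * H * A * (H * H) * B).trace := by
  rw [show H * A * H * (H * B * H) = H * (A * (H * H) * B) * H by simp only [mul_assoc],
    trace_mul_mul_self]
  simp only [mul_assoc]

lemma trace_hadamard_eq_trace_dgn_mul_dgn [DecidableEq m] (A B : Matrix m m ℝ) :
    (A ⊙ B).trace = (PaperDefs.dgn A * PaperDefs.dgn B).trace := by
  simp [PaperDefs.dgn, trace, hadamard]

end TraceIdentities

lemma integral_mul_div_mul_mul_div {Ω : Type*} [MeasurableSpace Ω] (μ : Measure Ω) (c d : ℝ)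
    (X Y : Ω → ℝ) :
    ∫ ω, c * X ω / d * (c * Y ω / d) ∂μ = (c / d) ^ 2 * ∫ ω, X ω * Y ω ∂μ := by
  rw [← integral_const_mul]
  congr 1 with ω
  ring

theorem statement2_general
    (p n : ℕ) (hn : 0 < n)
    {Ω : Type} [MeasurableSpace Ω] (μ : MeasureTheory.Measure Ω)
    (ν₄ : ℝ)
    (z : ℕ → Fin p → Ω → ℝ)
    (hmeas : ∀ k (j : Fin p), k < n → Measurable (z k j))
    (hindep : iIndepFun
      (fun kj : {k : ℕ // k < n} × Fin p => z kj.1.1 kj.2) μ)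
    (hmean : ∀ k (j : Fin p), k < n → ∫ ω, z k j ω ∂μ = 0)
    (hvar : ∀ k (j : Fin p), k < n → ∫ ω, (z k j ω) ^ 2 ∂μ = 1)
    (hm4 : ∀ k (j : Fin p), k < n → ∫ ω, (z k j ω) ^ 4 ∂μ = ν₄)
    (hint4 : ∀ k (j : Fin p), k < n → Integrable (fun ω => (z k j ω) ^ 4) μ)
    (Sig Sighalf : Matrix (Fin p) (Fin p) ℝ)
    (hSighalf : Sighalf.PosSemidef)
    (hsqrt : Sighalf * Sighalf = Sig)
    (A1 A2 : Matrix (Fin p) (Fin p) ℝ) (hA2 : A2.IsSymm) :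
    ∫ ω, (((PaperDefs.sampleCovRV p n Sighalf z ω) * A1).trace / p)
          * (((PaperDefs.sampleCovRV p n Sighalf z ω) * A2).trace / p) ∂μ
      = ((Sig * A1).trace / p) * ((Sig * A2).trace / p)
        + (1 / ((p : ℝ) * n)) * PaperDefs.muBil p ν₄ Sig Sighalf A1 A2 := by
  have hindepFin : iIndepFun (fun kj : Fin n × Fin p => z kj.1 kj.2) μ :=
    hindep.precomp (g := Prod.map Fin.equivSubtype id)
      (Fin.equivSubtype.injective.prodMap Function.injective_id)
  have hHt : Sighalfᵀ = Sighalf := by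
    simpa using hSighalf.isHermitian.eq
  have hB2 : (Sighalf * A2 * Sighalf)ᵀ = Sighalf * A2 * Sighalf := by
    rw [transpose_mul, transpose_mul, hHt, hA2.eq, mul_assoc]
  simp only [trace_sampleCovRV_mul, hHt]
  have hmoment := integral_dotProduct_mulVec_mul_dotProduct_mulVec hindepFin
    (fun kj => hmeas _ _ kj.1.2) (fun kj => hint4 _ _ kj.1.2) (fun kj => hmean _ _ kj.1.2)
    (fun kj => hvar _ _ kj.1.2) (fun kj => hm4 _ _ kj.1.2)
    (1 ⊗ₖ (Sighalf * A1 * Sighalf)) (1 ⊗ₖ (Sighalf * A2 * Sighalf))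
  rw [transpose_one_kronecker, hB2, one_kronecker_mul_one_kronecker,
    one_kronecker_hadamard_one_kronecker] at hmoment
  simp only [trace_one_kronecker, Fintype.card_fin, trace_hadamard_eq_trace_dgn_mul_dgn,
    trace_mul_mul_self_mul_mul_mul_self, trace_mul_mul_self, hsqrt] at hmoment
  rw [integral_mul_div_mul_mul_div, hmoment, PaperDefs.muBil]
  field_simp
  ring

/-- In the single-sample model, for symmetric `A₁, A₂`:
`E[(tr(S_n A₁)/p)(tr(S_n A₂)/p)] = (tr(Σ A₁)/p)(tr(Σ A₂)/p) + (1/(pn)) μ(A₁,A₂|Σ)`. -/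
theorem statement2
    (p n : ℕ) (hp : 0 < p) (hn : 0 < n)
    {Ω : Type} [MeasurableSpace Ω] (μ : MeasureTheory.Measure Ω) [IsProbabilityMeasure μ]
    (ν₄ : ℝ)
    (z : ℕ → Fin p → Ω → ℝ)
    (hmeas : ∀ k (j : Fin p), k < n → Measurable (z k j))
    (hindep : iIndepFun
      (fun kj : {k : ℕ // k < n} × Fin p => z kj.1.1 kj.2) μ)
    (hident : ∀ k k' (j j' : Fin p), k < n → k' < n →
      IdentDistrib (z k j) (z k' j') μ μ)
    (hmean : ∀ k (j : Fin p), k < n → ∫ ω, z k j ω ∂μ = 0)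
    (hvar : ∀ k (j : Fin p), k < n → ∫ ω, (z k j ω) ^ 2 ∂μ = 1)
    (hm4 : ∀ k (j : Fin p), k < n → ∫ ω, (z k j ω) ^ 4 ∂μ = ν₄)
    (hint4 : ∀ k (j : Fin p), k < n → Integrable (fun ω => (z k j ω) ^ 4) μ)
    (Sig Sighalf : Matrix (Fin p) (Fin p) ℝ)
    (hSig : Sig.PosSemidef) (hSighalf : Sighalf.PosSemidef)
    (hsqrt : Sighalf * Sighalf = Sig)
    (A1 A2 : Matrix (Fin p) (Fin p) ℝ) (hA1 : A1.IsSymm) (hA2 : A2.IsSymm) :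
    ∫ ω, (((PaperDefs.sampleCovRV p n Sighalf z ω) * A1).trace / p)
          * (((PaperDefs.sampleCovRV p n Sighalf z ω) * A2).trace / p) ∂μ
      = ((Sig * A1).trace / p) * ((Sig * A2).trace / p)
        + (1 / ((p : ℝ) * n)) * PaperDefs.muBil p ν₄ Sig Sighalf A1 A2 :=
  statement2_general p n hn μ ν₄ z hmeas hindep hmean hvar hm4 hint4 Sig Sighalf hSighalf hsqrt A1
    A2 hA2
end

section
/- In the single-sample model, E[(tr(S_n)/p)²] = (tr(Σ)/p)² + (1/(np))·{2·tr(Σ²)/p + (ν₄−3)·tr(𝒟(Σ)²)/p}. -/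
open Matrix MeasureTheory ProbabilityTheory Filter Finset

open scoped Kronecker

/-!
Write `tr S_n = n⁻¹ Zᵀ (I_n ⊗ Σ) Z`, where `Z` is the vector of all `n p` standardized entries
`z_{k,j}`. For a vector `f` of independent standardized entries with fourth moment `ν₄` and any
square matrix `A`, expanding `(fᵀ A f)²` and using the mixed fourth moments
`E[f_a f_b f_c f_d] = δ_ab δ_cd + δ_ac δ_bd + δ_ad δ_bc + (ν₄ - 3) δ_abcd` gives
`E[(fᵀ A f)²] = (tr A)² + tr(A Aᵀ) + tr(A²) + (ν₄ - 3) tr(𝒟(A)²)`.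
For `A = I_n ⊗ Σ` each of these traces is `n` or `n²` times the corresponding trace for `Σ`.
-/

def mixedFourthMoment {ι : Type*} [DecidableEq ι] (κ : ℝ) (a b c d : ι) : ℝ :=
  (if a = b then 1 else 0) * (if c = d then 1 else 0)
    + (if a = c then 1 else 0) * (if b = d then 1 else 0)
    + (if a = d then 1 else 0) * (if b = c then 1 else 0)
    + (if a = b ∧ a = c ∧ a = d then κ else 0)

namespace Matrix

variable {ι K m : Type*} [Fintype ι] [Fintype K] [Fintype m]

lemma dotProduct_mulVec_sq (A : Matrix ι ι ℝ) (x : ι → ℝ) :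
    (x ⬝ᵥ A *ᵥ x) ^ 2 = ∑ a, ∑ b, ∑ c, ∑ d, A a b * A c d * (x a * x b * x c * x d) := by
  simp only [sq, dotProduct, mulVec, Finset.mul_sum, Finset.sum_mul]
  refine sum_congr rfl fun a _ => sum_congr rfl fun b _ => sum_congr rfl fun c _ =>
    sum_congr rfl fun d _ => by ring

lemma sum_mul_mul_mixedFourthMoment [DecidableEq ι] (A : Matrix ι ι ℝ) (κ : ℝ) :
    ∑ a, ∑ b, ∑ c, ∑ d, A a b * A c d * mixedFourthMoment κ a b c d
      = A.trace ^ 2 + (A * Aᵀ).trace + (A * A).trace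
        + κ * (PaperDefs.dgn A * PaperDefs.dgn A).trace := by
  simp only [mixedFourthMoment, mul_ite, mul_one, mul_zero, ite_and, mul_add, sum_add_distrib,
    sum_ite_eq, mem_univ, ↓reduceIte, sum_ite_irrel, sum_const_zero, trace, diag_apply, sq, mul_sum,
    sum_mul, mul_apply, transpose_apply, PaperDefs.dgn, diagonal_mul_diagonal, diagonal_apply_eq]
  rw [Finset.sum_comm]
  simp_rw [mul_comm κ]

lemma dotProduct_mulVec_self (H : Matrix m m ℝ) (w : m → ℝ) :
    (H *ᵥ w) ⬝ᵥ (H *ᵥ w) = w ⬝ᵥ (Hᵀ * H) *ᵥ w := by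
  rw [← mulVec_mulVec, dotProduct_mulVec, ← mulVec_transpose, dotProduct_comm]

lemma dotProduct_one_kronecker_mulVec [DecidableEq K] (A : Matrix m m ℝ) (x : K × m → ℝ) :
    x ⬝ᵥ ((1 : Matrix K K ℝ) ⊗ₖ A) *ᵥ x = ∑ k, (fun a => x (k, a)) ⬝ᵥ A *ᵥ fun a => x (k, a) := by
  simp [dotProduct, mulVec, one_apply, Fintype.sum_prod_type, ite_mul, Finset.mul_sum]

lemma trace_one_kronecker_mul [DecidableEq K] (A B : Matrix m m ℝ) :
    ((1 : Matrix K K ℝ) ⊗ₖ A * (1 ⊗ₖ B)).trace = Fintype.card K * (A * B).trace := by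
  rw [← mul_kronecker_mul, one_mul, trace_kronecker, trace_one]

end Matrix

namespace PaperDefs

variable {K m : Type*} [DecidableEq K] [DecidableEq m]

lemma dgn_kronecker (A : Matrix K K ℝ) (B : Matrix m m ℝ) : dgn (A ⊗ₖ B) = dgn A ⊗ₖ dgn B := by
  simp [dgn, diagonal_kronecker_diagonal]

lemma dgn_one : dgn (1 : Matrix K K ℝ) = 1 := by
  simp [dgn, one_apply]

lemma trace_sampleCov (p nn : ℕ) (x : ℕ → Fin p → ℝ) :
    (sampleCov p nn x).trace = (nn : ℝ)⁻¹ * ∑ k ∈ range nn, x k ⬝ᵥ x k := by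
  simp [sampleCov, trace_sum]

lemma trace_sampleCovRV (p n : ℕ) {Ω : Type*} (H : Matrix (Fin p) (Fin p) ℝ)
    (z : ℕ → Fin p → Ω → ℝ) (ω : Ω) :
    (sampleCovRV p n H z ω).trace = (n : ℝ)⁻¹ *
      ((fun e : Fin n × Fin p => z e.1 e.2 ω) ⬝ᵥ ((1 : Matrix (Fin n) (Fin n) ℝ) ⊗ₖ (Hᵀ * H)) *ᵥ
        fun e => z e.1 e.2 ω) := by
  rw [sampleCovRV, trace_sampleCov, Matrix.dotProduct_one_kronecker_mulVec, Finset.sum_range]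
  simp_rw [Matrix.dotProduct_mulVec_self]

end PaperDefs

section FourthMoments

variable {Ω ι : Type*} [MeasurableSpace Ω] {μ : Measure Ω}

lemma integrable_mul_mul_mul_of_integrable_pow_four {g₁ g₂ g₃ g₄ : Ω → ℝ}
    (hm₁ : Measurable g₁) (hm₂ : Measurable g₂) (hm₃ : Measurable g₃) (hm₄ : Measurable g₄)
    (hi₁ : Integrable (fun ω => g₁ ω ^ 4) μ) (hi₂ : Integrable (fun ω => g₂ ω ^ 4) μ)
    (hi₃ : Integrable (fun ω => g₃ ω ^ 4) μ) (hi₄ : Integrable (fun ω => g₄ ω ^ 4) μ) :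
    Integrable (fun ω => g₁ ω * g₂ ω * g₃ ω * g₄ ω) μ := by
  refine Integrable.mono' (((hi₁.add hi₂).add hi₃).add hi₄)
    (((hm₁.mul hm₂).mul hm₃).mul hm₄).aestronglyMeasurable (ae_of_all _ fun ω => ?_)
  -- `|abcd| ≤ (a²b² + c²d²) / 2 ≤ (a⁴ + b⁴ + c⁴ + d⁴) / 4`
  rw [Real.norm_eq_abs, abs_le]
  constructor <;> simp only [Pi.add_apply] <;>
    nlinarith [sq_nonneg (g₁ ω * g₂ ω - g₃ ω * g₄ ω), sq_nonneg (g₁ ω * g₂ ω + g₃ ω * g₄ ω),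
      sq_nonneg (g₁ ω ^ 2 - g₂ ω ^ 2), sq_nonneg (g₃ ω ^ 2 - g₄ ω ^ 2)]

variable {f : ι → Ω → ℝ}

lemma ProbabilityTheory.iIndepFun.integral_finset_prod_pow (hind : iIndepFun f μ)
    (hmeas : ∀ i, Measurable (f i)) (r : ι → ℕ) (s : Finset ι) :
    ∫ ω, ∏ i ∈ s, f i ω ^ r i ∂μ = ∏ i ∈ s, ∫ ω, f i ω ^ r i ∂μ := by
  have hs : iIndepFun (fun i : s => fun ω => f i ω ^ r i) μ :=
    (hind.comp (fun i (t : ℝ) => t ^ r i) fun i => measurable_id.pow_const _).precomp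
      Subtype.val_injective
  simp only [← Finset.prod_coe_sort s]
  exact hs.integral_fun_prod_eq_prod_integral fun i => ((hmeas i).pow_const _).aestronglyMeasurable

variable [DecidableEq ι] (hind : iIndepFun f μ) (hmeas : ∀ i, Measurable (f i))
  (hm1 : ∀ i, ∫ ω, f i ω ∂μ = 0) (hm2 : ∀ i, ∫ ω, f i ω ^ 2 ∂μ = 1)
  {ν₄ : ℝ} (hm4 : ∀ i, ∫ ω, f i ω ^ 4 ∂μ = ν₄)
include hind hmeas hm1 hm2 hm4

lemma integral_mul_mul_mul_eq_mixedFourthMoment (a b c d : ι) :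
    ∫ ω, f a ω * f b ω * f c ω * f d ω ∂μ = mixedFourthMoment (ν₄ - 3) a b c d := by
  have hprod : ∫ ω, f a ω * f b ω * f c ω * f d ω ∂μ =
      ∏ i ∈ ({a, b, c, d} : Multiset ι).toFinset,
        ∫ ω, f i ω ^ Multiset.count i {a, b, c, d} ∂μ := by
    rw [← hind.integral_finset_prod_pow hmeas]
    congr 1 with ω
    rw [← Finset.prod_multiset_map_count]
    simp [mul_assoc]
  rw [hprod, mixedFourthMoment]
  -- Each equality pattern leaves moments of orders 2 and 4, or a factor `E f_i = 0`
  -- (which is why no third moment is needed).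
  by_cases hab : a = b <;> by_cases hac : a = c <;> by_cases had : a = d <;>
    by_cases hbc : b = c <;> by_cases hbd : b = d <;> by_cases hcd : c = d <;>
    subst_vars <;> simp [*, Multiset.count_cons, Finset.prod_insert, eq_comm] <;> ring

theorem integral_dotProduct_mulVec_sq [Fintype ι]
    (hint4 : ∀ i, Integrable (fun ω => f i ω ^ 4) μ) (A : Matrix ι ι ℝ) :
    ∫ ω, ((fun i => f i ω) ⬝ᵥ A *ᵥ fun i => f i ω) ^ 2 ∂μ
      = A.trace ^ 2 + (A * Aᵀ).trace + (A * A).trace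
        + (ν₄ - 3) * (PaperDefs.dgn A * PaperDefs.dgn A).trace := by
  have hint : ∀ a b c d, Integrable
      (fun ω => A a b * A c d * (f a ω * f b ω * f c ω * f d ω)) μ := fun a b c d =>
    (integrable_mul_mul_mul_of_integrable_pow_four (hmeas a) (hmeas b) (hmeas c) (hmeas d)
      (hint4 a) (hint4 b) (hint4 c) (hint4 d)).const_mul _
  rw [← Matrix.sum_mul_mul_mixedFourthMoment]
  simp_rw [Matrix.dotProduct_mulVec_sq,
    ← integral_mul_mul_mul_eq_mixedFourthMoment hind hmeas hm1 hm2 hm4, ← integral_const_mul]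
  rw [integral_finsetSum _ fun a _ => integrable_finsetSum _ fun b _ =>
    integrable_finsetSum _ fun c _ => integrable_finsetSum _ fun d _ => hint a b c d]
  refine sum_congr rfl fun a _ => ?_
  rw [integral_finsetSum _ fun b _ =>
    integrable_finsetSum _ fun c _ => integrable_finsetSum _ fun d _ => hint a b c d]
  refine sum_congr rfl fun b _ => ?_
  rw [integral_finsetSum _ fun c _ => integrable_finsetSum _ fun d _ => hint a b c d]
  exact sum_congr rfl fun c _ => integral_finsetSum _ fun d _ => hint a b c d

end FourthMoments

theorem statement3_general
    (p n : ℕ) (hn : 0 < n)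
    {Ω : Type} [MeasurableSpace Ω] (μ : MeasureTheory.Measure Ω)
    (ν₄ : ℝ)
    (z : ℕ → Fin p → Ω → ℝ)
    (hmeas : ∀ k (j : Fin p), k < n → Measurable (z k j))
    (hindep : iIndepFun
      (fun kj : {k : ℕ // k < n} × Fin p => z kj.1.1 kj.2) μ)
    (hmean : ∀ k (j : Fin p), k < n → ∫ ω, z k j ω ∂μ = 0)
    (hvar : ∀ k (j : Fin p), k < n → ∫ ω, (z k j ω) ^ 2 ∂μ = 1)
    (hm4 : ∀ k (j : Fin p), k < n → ∫ ω, (z k j ω) ^ 4 ∂μ = ν₄)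
    (hint4 : ∀ k (j : Fin p), k < n → Integrable (fun ω => (z k j ω) ^ 4) μ)
    (Sig Sighalf : Matrix (Fin p) (Fin p) ℝ)
    (hSighalf : Sighalf.PosSemidef)
    (hsqrt : Sighalf * Sighalf = Sig) :
    ∫ ω, ((PaperDefs.sampleCovRV p n Sighalf z ω).trace / p) ^ 2 ∂μ
      = (Sig.trace / p) ^ 2
        + (1 / ((n : ℝ) * p)) * (2 * ((Sig * Sig).trace / p)
            + (ν₄ - 3) * ((PaperDefs.dgn Sig * PaperDefs.dgn Sig).trace / p)) := by
  have hZind : iIndepFun (fun e : Fin n × Fin p => z e.1 e.2) μ :=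
    hindep.precomp (Fin.equivSubtype.injective.prodMap Function.injective_id)
  have hHsymm : Sighalfᵀ = Sighalf := hSighalf.isHermitian
  have hSigsymm : Sigᵀ = Sig := by rw [← hsqrt, transpose_mul, hHsymm]
  have hmoment := integral_dotProduct_mulVec_sq hZind (fun e => hmeas _ _ e.1.2)
    (fun e => hmean _ _ e.1.2) (fun e => hvar _ _ e.1.2) (fun e => hm4 _ _ e.1.2)
    (fun e => hint4 _ _ e.1.2) (1 ⊗ₖ Sig)
  rw [← kroneckerMap_transpose, transpose_one, hSigsymm, PaperDefs.dgn_kronecker,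
    PaperDefs.dgn_one, Matrix.trace_one_kronecker_mul, Matrix.trace_one_kronecker_mul,
    trace_kronecker, trace_one, Fintype.card_fin] at hmoment
  simp_rw [PaperDefs.trace_sampleCovRV, hHsymm, hsqrt, div_pow, mul_pow, integral_div,
    integral_const_mul, hmoment]
  have hn' : (n : ℝ) ≠ 0 := by positivity
  field_simp
  ring

/-- In the single-sample model,
`E[(tr(S_n)/p)²] = (tr(Σ)/p)² + (1/(np)){2 tr(Σ²)/p + (ν₄−3) tr(𝒟(Σ)²)/p}`. -/
theorem statement3
    (p n : ℕ) (hp : 0 < p) (hn : 0 < n)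
    {Ω : Type} [MeasurableSpace Ω] (μ : MeasureTheory.Measure Ω) [IsProbabilityMeasure μ]
    (ν₄ : ℝ)
    (z : ℕ → Fin p → Ω → ℝ)
    (hmeas : ∀ k (j : Fin p), k < n → Measurable (z k j))
    (hindep : iIndepFun
      (fun kj : {k : ℕ // k < n} × Fin p => z kj.1.1 kj.2) μ)
    (hident : ∀ k k' (j j' : Fin p), k < n → k' < n →
      IdentDistrib (z k j) (z k' j') μ μ)
    (hmean : ∀ k (j : Fin p), k < n → ∫ ω, z k j ω ∂μ = 0)
    (hvar : ∀ k (j : Fin p), k < n → ∫ ω, (z k j ω) ^ 2 ∂μ = 1)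
    (hm4 : ∀ k (j : Fin p), k < n → ∫ ω, (z k j ω) ^ 4 ∂μ = ν₄)
    (hint4 : ∀ k (j : Fin p), k < n → Integrable (fun ω => (z k j ω) ^ 4) μ)
    (Sig Sighalf : Matrix (Fin p) (Fin p) ℝ)
    (hSig : Sig.PosSemidef) (hSighalf : Sighalf.PosSemidef)
    (hsqrt : Sighalf * Sighalf = Sig) :
    ∫ ω, ((PaperDefs.sampleCovRV p n Sighalf z ω).trace / p) ^ 2 ∂μ
      = (Sig.trace / p) ^ 2
        + (1 / ((n : ℝ) * p)) * (2 * ((Sig * Sig).trace / p)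
            + (ν₄ - 3) * ((PaperDefs.dgn Sig * PaperDefs.dgn Sig).trace / p)) :=
  statement3_general p n hn μ ν₄ z hmeas hindep hmean hvar hm4 hint4 Sig Sighalf hSighalf hsqrt
end

section
/- Let Σ_1, …, Σ_m be p×p real symmetric matrices whose linear span H has dimension d with 1 ≤ d ≤ m, in the space of p×p real symmetric matrices with inner product ⟨A,B⟩ = tr(AB)/p. Let Σ be any p×p real symmetric matrix with orthogonal decomposition Σ = Σ₀ + Σ_⊥, where Σ₀ ∈ H and Σ_⊥ ∈ H^⊥. Then: C(m,d)^{-1} Σ_{J} T(Σ;J) = M^{(d)}·Σ_⊥, and C(m,d)^{-1} Σ_{J} Σ_{k=1}^{d} (−1)^{k+1} C_k(Σ;J)·Σ_{i_k} = M^{(d)}·Σ₀, where both sums run over all d-element subsets J = {i_1 < ⋯ < i_d} of {1,…,m}. -/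
/-!
For a family `V₁, …, V_d` and a bilinear form `β`, pairing the formal determinant
`T(X) = ∑ₖ (-1)ᵏ Cₖ(X) Bₖ` with `V_r` yields a determinant with two equal rows, so `T(X)`
is `β`-orthogonal to every `V_r`; moreover `T(X) ≡ det(Gram V) • X` modulo `span V`.
If the `V_r` are independent they span `H`, so for `X = X₀ + X_⊥` the difference
`T(X) - det(Gram V) • X_⊥` lies in `H` and is orthogonal to `H`; it vanishes because
`tr(Y²)/p > 0` for symmetric `Y ≠ 0`. If they are dependent, all cofactors vanish.
Averaging over `J` gives the first identity, and the second follows since the tail is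
`det(Gram V) • X - T(X)`.
-/

open Matrix MeasureTheory ProbabilityTheory Filter Finset

namespace LinearMap.BilinForm

variable {K M : Type*} [Field K] [AddCommGroup M] [Module K M]
  (β : LinearMap.BilinForm K M) {d : ℕ}

/-- `formalDetCofactor β V X k` is the paper's `C_k`: the minor obtained by deleting column `k`
of the `d × (d+1)` matrix `(β (V r) (B s))`, where `B = (X, V 0, …, V (d-1))`. -/
def formalDetCofactor (V : Fin d → M) (X : M) (k : Fin (d + 1)) : K :=
  (Matrix.of fun r t : Fin d => β (V r) ((Fin.cons X V : Fin (d + 1) → M) (k.succAbove t))).det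

def formalDet (V : Fin d → M) (X : M) : M :=
  ∑ k : Fin (d + 1),
    ((-1) ^ (k : ℕ) * β.formalDetCofactor V X k) • (Fin.cons X V : Fin (d + 1) → M) k

def formalDetTail (V : Fin d → M) (X : M) : M :=
  ∑ k : Fin d, ((-1) ^ ((k : ℕ) + 1 + 1) * β.formalDetCofactor V X k.succ) • V k

def gramDet (V : Fin d → M) : K :=
  (Matrix.of fun r t : Fin d => β (V r) (V t)).det

variable {β} {V : Fin d → M} {X : M}

lemma formalDetCofactor_zero : β.formalDetCofactor V X 0 = β.gramDet V := by
  simp [formalDetCofactor, gramDet]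

lemma formalDet_add_formalDetTail :
    β.formalDet V X + β.formalDetTail V X = β.gramDet V • X := by
  rw [formalDet, Fin.sum_univ_succ, formalDetTail, add_assoc, ← sum_add_distrib]
  simp [pow_succ, formalDetCofactor_zero]

lemma formalDetTail_mem_span : β.formalDetTail V X ∈ Submodule.span K (Set.range V) :=
  Submodule.sum_mem _ fun k _ => Submodule.smul_mem _ _ (Submodule.subset_span ⟨k, rfl⟩)

/-- The left side is the first-row expansion of a determinant whose rows `0` and `r + 1`
coincide. -/
lemma apply_formalDet (r : Fin d) : β (V r) (β.formalDet V X) = 0 := by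
  let N : Matrix (Fin (d + 1)) (Fin (d + 1)) K :=
    of fun s t =>
      β ((Fin.cons (V r) V : Fin (d + 1) → M) s) ((Fin.cons X V : Fin (d + 1) → M) t)
  have hN : N.det = 0 := det_zero_of_row_eq (Fin.succ_ne_zero r).symm (by ext t; simp [N])
  rw [det_succ_row_zero] at hN
  rw [← hN, formalDet, map_sum]
  refine sum_congr rfl fun k _ => ?_
  rw [map_smul, smul_eq_mul, formalDetCofactor]
  simp only [of_apply, Fin.cons_zero, submatrix, Fin.cons_succ, N]
  ring

lemma formalDetCofactor_eq_zero_of_not_linearIndependent (hV : ¬ LinearIndependent K V)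
    (k : Fin (d + 1)) : β.formalDetCofactor V X k = 0 := by
  obtain ⟨c, hc, r, hr⟩ := Fintype.not_linearIndependent_iff.mp hV
  refine exists_vecMul_eq_zero_iff.mp ⟨c, fun h => hr (by simp [h]), ?_⟩
  ext t
  simp only [vecMul, dotProduct, of_apply, Pi.zero_apply]
  have hlin : ∀ Y, ∑ i, c i * β (V i) Y = β (∑ i, c i • V i) Y := by
    simp [map_sum, LinearMap.sum_apply]
  simp [hlin, hc]

variable {X₀ X₁ : M}

/-- The difference `Z` lies in `span V` and is `β`-orthogonal to it, hence vanishes. -/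
theorem formalDet_add_eq_gramDet_smul_of_mem_span
    (hanis : ∀ Y ∈ Submodule.span K (Set.range V), β Y Y = 0 → Y = 0)
    (hX₀ : X₀ ∈ Submodule.span K (Set.range V)) (hX₁ : ∀ r, β (V r) X₁ = 0) :
    β.formalDet V (X₀ + X₁) = β.gramDet V • X₁ := by
  set Z := β.formalDet V (X₀ + X₁) - β.gramDet V • X₁
  have hZ : Z = β.gramDet V • X₀ - β.formalDetTail V (X₀ + X₁) := by
    linear_combination (norm := module) formalDet_add_formalDetTail (β := β) (X := X₀ + X₁)
  have hZ_mem : Z ∈ Submodule.span K (Set.range V) :=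
    hZ ▸ sub_mem (Submodule.smul_mem _ _ hX₀) formalDetTail_mem_span
  have hZ_ortho : Submodule.span K (Set.range V) ≤ LinearMap.ker (β.flip Z) :=
    Submodule.span_le.mpr <| Set.range_subset_iff.mpr fun r => by
      simp [Z, apply_formalDet, hX₁]
  exact sub_eq_zero.mp (hanis Z hZ_mem (hZ_ortho hZ_mem))

/-- If `V` is linearly dependent, every cofactor vanishes; otherwise `V` spans `H`. -/
theorem formalDet_add_eq_gramDet_smul {H : Submodule K M} [FiniteDimensional K H]
    (hanis : ∀ Y ∈ H, β Y Y = 0 → Y = 0) (hVH : ∀ k, V k ∈ H) (hH : Module.finrank K H ≤ d)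
    (hX₀ : X₀ ∈ H) (hX₁ : ∀ Y ∈ H, β Y X₁ = 0) :
    β.formalDet V (X₀ + X₁) = β.gramDet V • X₁ := by
  by_cases hV : LinearIndependent K V
  · have hspan : Submodule.span K (Set.range V) = H :=
      Submodule.eq_of_le_of_finrank_le (Submodule.span_le.mpr (Set.range_subset_iff.mpr hVH))
        (by rwa [finrank_span_eq_card hV, Fintype.card_fin])
    subst hspan
    exact formalDet_add_eq_gramDet_smul_of_mem_span hanis hX₀
      fun r => hX₁ _ (Submodule.subset_span ⟨r, rfl⟩)
  · simp [formalDet, ← formalDetCofactor_zero (X := X₀ + X₁),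
      formalDetCofactor_eq_zero_of_not_linearIndependent hV]

theorem formalDetTail_add_eq_gramDet_smul {H : Submodule K M} [FiniteDimensional K H]
    (hanis : ∀ Y ∈ H, β Y Y = 0 → Y = 0) (hVH : ∀ k, V k ∈ H) (hH : Module.finrank K H ≤ d)
    (hX₀ : X₀ ∈ H) (hX₁ : ∀ Y ∈ H, β Y X₁ = 0) :
    β.formalDetTail V (X₀ + X₁) = β.gramDet V • X₀ := by
  linear_combination (norm := module) formalDet_add_formalDetTail (β := β) (X := X₀ + X₁) -
    formalDet_add_eq_gramDet_smul hanis hVH hH hX₀ hX₁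

end LinearMap.BilinForm

noncomputable def normalizedTraceForm (p : ℕ) :
    LinearMap.BilinForm ℝ (Matrix (Fin p) (Fin p) ℝ) :=
  LinearMap.mk₂ ℝ (fun X Y => (X * Y).trace / p)
    (fun X X' Y => by rw [add_mul, trace_add, add_div])
    (fun c X Y => by rw [smul_mul_assoc, trace_smul, smul_eq_mul, smul_eq_mul, mul_div_assoc])
    (fun X Y Y' => by rw [mul_add, trace_add, add_div])
    (fun c X Y => by rw [mul_smul_comm, trace_smul, smul_eq_mul, smul_eq_mul, mul_div_assoc])

lemma normalizedTraceForm_apply {p : ℕ} (X Y : Matrix (Fin p) (Fin p) ℝ) :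
    normalizedTraceForm p X Y = (X * Y).trace / p :=
  rfl

lemma eq_zero_of_normalizedTraceForm_self {p : ℕ} {Y : Matrix (Fin p) (Fin p) ℝ}
    (hY : Y.IsSymm) (h : normalizedTraceForm p Y Y = 0) : Y = 0 := by
  rcases div_eq_zero_iff.mp h with h | h
  · have hYY : Y * Y = Yᴴ * Y := by rw [conjTranspose_eq_transpose_of_trivial, hY.eq]
    rwa [hYY, trace_conjTranspose_mul_self_eq_zero_iff] at h
  · obtain rfl : p = 0 := by exact_mod_cast h
    exact Subsingleton.elim _ _

lemma isSymm_of_mem_span {n : Type*} {S : Set (Matrix n n ℝ)} (hS : ∀ X ∈ S, X.IsSymm)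
    {Y : Matrix n n ℝ} (hY : Y ∈ Submodule.span ℝ S) : Y.IsSymm := by
  induction hY using Submodule.span_induction with
  | mem X hX => exact hS X hX
  | zero => exact isSymm_zero
  | add X Y _ _ hX hY => exact hX.add hY
  | smul c X _ hX => exact hX.smul c

namespace PaperDefs

variable {p d : ℕ} {Sig : ℕ → Matrix (Fin p) (Fin p) ℝ} {J : Finset ℕ}

lemma detRow_eq_formalDet (top : Matrix (Fin p) (Fin p) ℝ) (h : J.card = d) :
    detRow p d Sig top J =
      (normalizedTraceForm p).formalDet (fun l => Sig (J.orderEmbOfFin h l)) top := by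
  rw [detRow, dif_pos h]
  rfl

lemma detRow0_eq_formalDetTail (top : Matrix (Fin p) (Fin p) ℝ) (h : J.card = d) :
    detRow0 p d Sig top J =
      (normalizedTraceForm p).formalDetTail (fun l => Sig (J.orderEmbOfFin h l)) top := by
  rw [detRow0, dif_pos h]
  rfl

lemma subdet_gramG_eq_gramDet (h : J.card = d) :
    subdet (gramG p Sig) J =
      (normalizedTraceForm p).gramDet (fun l => Sig (J.orderEmbOfFin h l)) := by
  rw [subdet, ← det_submatrix_equiv_self (J.orderIsoOfFin h).toEquiv]
  rfl

lemma inv_choose_smul_sum_eq_Mavg_smul {M : Type*} [AddCommGroup M] [Module ℝ M]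
    {G : ℕ → ℕ → ℝ} {m : ℕ} {F : Finset ℕ → M} {X : M}
    (hF : ∀ J ∈ (range m).powersetCard d, F J = subdet G J • X) :
    ((m.choose d : ℝ))⁻¹ • ∑ J ∈ (range m).powersetCard d, F J = Mavg G m d • X := by
  rw [sum_congr rfl hF, ← sum_smul, smul_smul, Mavg]

end PaperDefs

open LinearMap.BilinForm PaperDefs

theorem statement13_general (p m d : ℕ)
    (Sig : ℕ → Matrix (Fin p) (Fin p) ℝ)
    (hsymm : ∀ i, i < m → (Sig i).IsSymm)
    (hdim : Module.finrank ℝ (Submodule.span ℝ (Sig '' Set.Iio m)) = d)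
    (A A0 Aperp : Matrix (Fin p) (Fin p) ℝ)
    (hA0 : A0 ∈ Submodule.span ℝ (Sig '' Set.Iio m))
    (hperp : ∀ B ∈ Submodule.span ℝ (Sig '' Set.Iio m), (Aperp * B).trace / p = 0)
    (hdecomp : A = A0 + Aperp) :
    ((m.choose d : ℝ))⁻¹ •
        (∑ J ∈ (Finset.range m).powersetCard d, PaperDefs.detRow p d Sig A J)
      = (PaperDefs.Mavg (PaperDefs.gramG p Sig) m d) • Aperp ∧
    ((m.choose d : ℝ))⁻¹ •
        (∑ J ∈ (Finset.range m).powersetCard d, PaperDefs.detRow0 p d Sig A J)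
      = (PaperDefs.Mavg (PaperDefs.gramG p Sig) m d) • A0 := by
  set H := Submodule.span ℝ (Sig '' Set.Iio m)
  have : FiniteDimensional ℝ H :=
    FiniteDimensional.span_of_finite ℝ ((Set.finite_Iio m).image Sig)
  have hanis : ∀ Y ∈ H, normalizedTraceForm p Y Y = 0 → Y = 0 := fun Y hY =>
    eq_zero_of_normalizedTraceForm_self <| isSymm_of_mem_span (by
      rintro _ ⟨i, hi, rfl⟩; exact hsymm i hi) hY
  have hAperp : ∀ Y ∈ H, normalizedTraceForm p Y Aperp = 0 := fun Y hY => by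
    rw [normalizedTraceForm_apply, trace_mul_comm]; exact hperp Y hY
  have hVH : ∀ J ∈ (range m).powersetCard d, ∀ (h : J.card = d) (l : Fin d),
      Sig (J.orderEmbOfFin h l) ∈ H := fun J hJ h l =>
    Submodule.subset_span
      ⟨_, mem_range.mp ((mem_powersetCard.mp hJ).1 (J.orderEmbOfFin_mem h l)), rfl⟩
  subst hdecomp
  constructor
  · refine inv_choose_smul_sum_eq_Mavg_smul fun J hJ => ?_
    have h := (mem_powersetCard.mp hJ).2
    rw [detRow_eq_formalDet _ h, subdet_gramG_eq_gramDet h,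
      formalDet_add_eq_gramDet_smul hanis (hVH J hJ h) hdim.le hA0 hAperp]
  · refine inv_choose_smul_sum_eq_Mavg_smul fun J hJ => ?_
    have h := (mem_powersetCard.mp hJ).2
    rw [detRow0_eq_formalDetTail _ h, subdet_gramG_eq_gramDet h,
      formalDetTail_add_eq_gramDet_smul hanis (hVH J hJ h) hdim.le hA0 hAperp]

/-- Lemma 2.3, orthogonal decomposition. In the space of `p×p` real
symmetric matrices with inner product `⟨A,B⟩ = tr(AB)/p`, if `Σ = Σ₀ + Σ_⊥` is the orthogonal
decomposition of `Σ` w.r.t. the span `H` of `Σ_1,…,Σ_m` (of dimension `d`), then the average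
over `d`-subsets `J` of the matrix determinants `T(Σ;J)` equals `M^{(d)}·Σ_⊥`, and the
average of `∑_{k=1}^d (−1)^{k+1} C_k(Σ;J)·Σ_{i_k}` equals `M^{(d)}·Σ₀`. -/
theorem statement13 (p m d : ℕ) (hp : 0 < p) (hd1 : 1 ≤ d) (hdm : d ≤ m)
    (Sig : ℕ → Matrix (Fin p) (Fin p) ℝ)
    (hsymm : ∀ i, i < m → (Sig i).IsSymm)
    (hdim : Module.finrank ℝ (Submodule.span ℝ (Sig '' Set.Iio m)) = d)
    (A A0 Aperp : Matrix (Fin p) (Fin p) ℝ)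
    (hAsymm : A.IsSymm)
    (hA0 : A0 ∈ Submodule.span ℝ (Sig '' Set.Iio m))
    (hperp : ∀ B ∈ Submodule.span ℝ (Sig '' Set.Iio m), (Aperp * B).trace / p = 0)
    (hdecomp : A = A0 + Aperp) :
    ((m.choose d : ℝ))⁻¹ •
        (∑ J ∈ (Finset.range m).powersetCard d, PaperDefs.detRow p d Sig A J)
      = (PaperDefs.Mavg (PaperDefs.gramG p Sig) m d) • Aperp ∧
    ((m.choose d : ℝ))⁻¹ •
        (∑ J ∈ (Finset.range m).powersetCard d, PaperDefs.detRow0 p d Sig A J)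
      = (PaperDefs.Mavg (PaperDefs.gramG p Sig) m d) • A0 :=
  statement13_general p m d Sig hsymm hdim A A0 Aperp hA0 hperp hdecomp
end
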